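/- Let m≥4, q even, π a permutation of {0,…,m−3}, and g=Σ_{α=0}^{m−4} x_{π(α)}x_{π(α+1)}. Define p=Ψ((q/2)g), q̃=Ψ((q/2)(g+x_{π(0)}+x_{π(m−3)}+c₁)), u=Ψ((q/2)(g+x_{π(m−3)})), v=Ψ((q/2)(g+x_{π(0)}+c₁)) for any c₁∈Z_q, all of length 2^{m−2}. Then C(p,q̃)(τ)+C(u,v)(τ)=0 for all shifts τ with 2^{m−2}−2^{π(m−3)} ≤ τ ≤ 2^{m−2}−1. -/

import Mathlib

open Finset Complex

/-- ω = exp(2πi/q). -/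
noncomputable def omegaq (q : ℕ) : ℂ := Complex.exp (2 * Real.pi * Complex.I / q)

/-- Aperiodic cross-correlation of two length-`N` complex sequences at shift `τ`. -/
noncomputable def acorr (N : ℕ) (x y : ℕ → ℂ) (τ : ℕ) : ℂ :=
  ∑ i ∈ Finset.range (N - τ), x i * (starRingEnd ℂ) (y (i + τ))

/-- `k`-th binary digit of `i`. -/
def bit (i k : ℕ) : ℕ := (i / 2 ^ k) % 2

/-!
For a shift `τ ≥ 2^(m-2) - 2^s` with `s = π (m-3)`, every index `i` in the correlation sum
satisfies `i < 2^s` while `i + τ` lies in the top block `[2^(m-2) - 2^s, 2^(m-2))`; so digit `s`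
is `0` at `i` and `1` at `i + τ`. With `ω^(q/2) = -1`, the term of `C(p, q̃)` is then the negative
of the term of `C(u, v)`, and the sum vanishes term by term.
-/

theorem omegaq_pow_half {q : ℕ} (hq : q ≠ 0) (hq2 : 2 ∣ q) : omegaq q ^ (q / 2) = -1 := by
  obtain ⟨k, rfl⟩ := hq2
  have hk : (k : ℂ) ≠ 0 := by exact_mod_cast right_ne_zero_of_mul hq
  rw [omegaq, ← Complex.exp_nat_mul, Nat.mul_div_cancel_left k two_pos, ← Complex.exp_pi_mul_I]
  congr 1
  push_cast
  field_simp

theorem bit_eq_zero_of_lt {i k : ℕ} (h : i < 2 ^ k) : bit i k = 0 := by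
  rw [bit, Nat.div_eq_of_lt h, Nat.zero_mod]

theorem bit_eq_one_of_top_block {j k n : ℕ} (hk : k < n) (hlo : 2 ^ n - 2 ^ k ≤ j)
    (hhi : j < 2 ^ n) : bit j k = 1 := by
  have hsplit : 2 ^ n = 2 ^ (n - k) * 2 ^ k := by rw [← pow_add, Nat.sub_add_cancel hk.le]
  have heven : 2 ^ (n - k) = 2 * 2 ^ (n - k - 1) := by
    rw [← pow_succ']; congr 1; omega
  have hquot : j / 2 ^ k = 2 ^ (n - k) - 1 := by
    apply Nat.div_eq_of_lt_le
    · rw [Nat.sub_mul, one_mul, ← hsplit]; exact hlo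
    · rw [Nat.sub_add_cancel Nat.one_le_two_pow, ← hsplit]; exact hhi
  rw [bit, hquot, heven]
  have : 1 ≤ 2 ^ (n - k - 1) := Nat.one_le_two_pow
  omega

theorem pow_mul_conj_add_pow_mul_conj_eq_zero {ζ : ℂ} {r : ℕ} (hζ : ζ ^ r = -1) (a b : ℕ) :
    ζ ^ (r * a) * starRingEnd ℂ (ζ ^ (r * (b + 1))) + ζ ^ (r * a) * starRingEnd ℂ (ζ ^ (r * b))
      = 0 := by
  simp only [pow_mul, hζ, pow_succ, map_mul, map_pow, map_neg, map_one]
  ring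

theorem stmt_3_general (q m c₁ : ℕ) (hq : 2 ≤ q) (hq2 : 2 ∣ q) (hm : 4 ≤ m)
    (π : ℕ → ℕ) (hπ : Set.BijOn π (Set.Iio (m - 2)) (Set.Iio (m - 2)))
    (g : ℕ → ℕ)
    (p qs u v : ℕ → ℂ)
    (hp : ∀ i, p i = omegaq q ^ (q / 2 * g i))
    (hqs : ∀ i, qs i = omegaq q ^ (q / 2 * (g i + bit i (π 0) + bit i (π (m - 3)) + c₁)))
    (hu : ∀ i, u i = omegaq q ^ (q / 2 * (g i + bit i (π (m - 3)))))
    (hv : ∀ i, v i = omegaq q ^ (q / 2 * (g i + bit i (π 0) + c₁))) :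
    ∀ τ : ℕ, 2 ^ (m - 2) - 2 ^ π (m - 3) ≤ τ → τ ≤ 2 ^ (m - 2) - 1 →
      acorr (2 ^ (m - 2)) p qs τ + acorr (2 ^ (m - 2)) u v τ = 0 := by
  intro τ hτlo hτhi
  have hs : π (m - 3) < m - 2 := hπ.mapsTo (show m - 3 < m - 2 by omega)
  rw [acorr, acorr, ← sum_add_distrib]
  refine sum_eq_zero fun i hi => ?_
  rw [mem_range] at hi
  have hbit_i : bit i (π (m - 3)) = 0 := bit_eq_zero_of_lt (by omega)
  have hbit_j : bit (i + τ) (π (m - 3)) = 1 := bit_eq_one_of_top_block hs (by omega) (by omega)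
  rw [hp, hqs, hu, hv, hbit_i, hbit_j, add_zero, add_right_comm _ 1]
  exact pow_mul_conj_add_pow_mul_conj_eq_zero (omegaq_pow_half (by omega) hq2) _ _

/-- cross-correlation property of Lemma 3. -/
theorem stmt_3 (q m c₁ : ℕ) (hq : 2 ≤ q) (hq2 : 2 ∣ q) (hm : 4 ≤ m)
    (π : ℕ → ℕ) (hπ : Set.BijOn π (Set.Iio (m - 2)) (Set.Iio (m - 2)))
    (g : ℕ → ℕ)
    (hg : ∀ i, g i = ∑ k ∈ Finset.range (m - 3), bit i (π k) * bit i (π (k + 1)))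
    (p qs u v : ℕ → ℂ)
    (hp : ∀ i, p i = omegaq q ^ (q / 2 * g i))
    (hqs : ∀ i, qs i = omegaq q ^ (q / 2 * (g i + bit i (π 0) + bit i (π (m - 3)) + c₁)))
    (hu : ∀ i, u i = omegaq q ^ (q / 2 * (g i + bit i (π (m - 3)))))
    (hv : ∀ i, v i = omegaq q ^ (q / 2 * (g i + bit i (π 0) + c₁))) :
    ∀ τ : ℕ, 2 ^ (m - 2) - 2 ^ π (m - 3) ≤ τ → τ ≤ 2 ^ (m - 2) - 1 →
      acorr (2 ^ (m - 2)) p qs τ + acorr (2 ^ (m - 2)) u v τ = 0 :=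
  stmt_3_general q m c₁ hq hq2 hm π hπ g p qs u v hp hqs hu hv
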